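/- arXiv:2502.06010 — 8 statements merged into one kernel-verified Lean document; each statement's English description precedes it below -/
import Mathlib

section
/- For a Galois connection (f, g) between posets P and Q (f : P → Q, g : Q → P, with f(x) ≤ y ↔ x ≤ g(y)), the following are equivalent: (LM1) the image of f is down-closed, i.e., whenever c ≤ f(b) there exists a with c = f(a); (LM2) whenever c ≤ d in Q, f(g(c)) = c ∧ f(g(d)); (LM3) whenever a meet c ∧ d exists in Q, f(g(c ∧ d)) = c ∧ f(g(d)). -/
theorem LM1_iff_LM2_iff_LM3 {P Q : Type*} [Lattice P] [Lattice Q]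
    {f : P → Q} {g : Q → P} (gc : GaloisConnection f g) :
    ((∀ (b : P) (c : Q), c ≤ f b → ∃ a : P, c = f a) ↔
      (∀ c d : Q, c ≤ d → f (g c) = c ⊓ f (g d))) ∧
    ((∀ c d : Q, c ≤ d → f (g c) = c ⊓ f (g d)) ↔
      (∀ c d : Q, f (g (c ⊓ d)) = c ⊓ f (g d))) := by
  constructor
  · constructor
    · intro h1 c d hcd
      apply le_antisymm
      · exact le_inf (gc.l_u_le c) (gc.monotone_l (gc.monotone_u hcd))
      · obtain ⟨a, ha⟩ := h1 (g d) (c ⊓ f (g d)) inf_le_right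
        rw [ha]
        exact gc.monotone_l (gc.le_iff_le.mp (ha ▸ inf_le_left))
    · intro h2 b c hc
      refine ⟨g c, ?_⟩
      have := h2 c (f b) hc
      rw [this]
      have : f (g (f b)) = f b := le_antisymm (gc.l_u_le _) (gc.monotone_l (gc.le_u_l b))
      rw [this, inf_eq_left.mpr hc]
  · constructor
    · intro h2 c d
      rw [h2 (c ⊓ d) d inf_le_right]
      apply le_antisymm
      · exact le_inf (inf_le_of_left_le inf_le_left) inf_le_right
      · exact le_inf (le_inf inf_le_left (le_trans inf_le_right (gc.l_u_le d))) inf_le_right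
    · intro h3 c d hcd
      have := h3 c d
      rwa [inf_eq_left.mpr hcd] at this
end

section
/- For a Galois connection (f, g) between lattices P and Q with P having a top element ⊤, the condition (LM0): f(g(y)) = y ∧ f(⊤) for all y ∈ Q, is equivalent to the condition (LM1): the image of f is down-closed, i.e., whenever c ≤ f(b) there exists a ∈ P with c = f(a). -/
theorem LM0_iff_LM1 {P Q : Type*} [Lattice P] [OrderTop P] [Lattice Q]
    {f : P → Q} {g : Q → P} (gc : GaloisConnection f g) :
    (∀ y : Q, f (g y) = y ⊓ f ⊤) ↔
      (∀ (b : P) (c : Q), c ≤ f b → ∃ a : P, c = f a) := by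
  constructor
  · intro h b c hcb
    refine ⟨g c, ?_⟩
    have hc : c ≤ f ⊤ := hcb.trans (gc.monotone_l le_top)
    rw [h c, inf_eq_left.mpr hc]
  · intro h y
    apply le_antisymm
    · exact le_inf (gc.l_u_le y) (gc.monotone_l le_top)
    · obtain ⟨a, ha⟩ := h ⊤ (y ⊓ f ⊤) inf_le_right
      rw [ha]
      exact gc.monotone_l (gc.le_u (ha ▸ inf_le_left))
end

section
/- For a Galois connection (f, g) between lattices P and Q with Q having a bottom element ⊥, the condition (RM0): g(f(x)) = x ∨ g(⊥) for all x ∈ P, is equivalent to the condition (RM1): the image of g is up-closed, i.e., whenever b ≥ g(c) there exists d ∈ Q with b = g(d). -/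
theorem RM0_iff_RM1 {P Q : Type*} [Lattice P] [Lattice Q] [OrderBot Q]
    {f : P → Q} {g : Q → P} (gc : GaloisConnection f g) :
    (∀ x : P, g (f x) = x ⊔ g ⊥) ↔
      (∀ (b : P) (c : Q), g c ≤ b → ∃ d : Q, b = g d) := by
  constructor
  · intro h b c hcb
    refine ⟨f b, ?_⟩
    have : g ⊥ ≤ b := le_trans (gc.monotone_u bot_le) hcb
    rw [h b, sup_eq_left.mpr this]
  · intro h x
    obtain ⟨d, hd⟩ := h (x ⊔ g ⊥) ⊥ le_sup_right
    apply le_antisymm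
    · rw [hd]
      exact gc.monotone_u (gc.l_le (hd ▸ le_sup_left))
    · exact sup_le (gc.le_u_l x) (gc.monotone_u bot_le)
end

section
/- For a Galois connection (f, g) between posets P and Q, the following are equivalent: (RM1) the image of g is up-closed; (RM2) whenever a ≤ b in P, g(f(b)) = b ∨ g(f(a)); (RM3) whenever a join a ∨ b exists in P, g(f(a ∨ b)) = a ∨ g(f(b)). -/
theorem RM1_iff_RM2_iff_RM3 {P Q : Type*} [Lattice P] [Lattice Q]
    {f : P → Q} {g : Q → P} (gc : GaloisConnection f g) :
    ((∀ (b : P) (c : Q), g c ≤ b → ∃ d : Q, b = g d) ↔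
      (∀ a b : P, a ≤ b → g (f b) = b ⊔ g (f a))) ∧
    ((∀ a b : P, a ≤ b → g (f b) = b ⊔ g (f a)) ↔
      (∀ a b : P, g (f (a ⊔ b)) = a ⊔ g (f b))) := by
  constructor
  · constructor
    · intro h1 a b hab
      obtain ⟨d, hd⟩ := h1 (b ⊔ g (f a)) (f a) le_sup_right
      apply le_antisymm
      · rw [hd]
        exact gc.monotone_u (gc.l_le (hd ▸ le_sup_left))
      · exact sup_le (gc.le_u_l b) (gc.monotone_u (gc.monotone_l hab))
    · intro h2 b c hcb
      refine ⟨f b, ?_⟩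
      rw [h2 (g c) b hcb, gc.u_l_u_eq_u, sup_eq_left.mpr hcb]
  · constructor
    · intro h2 a b
      rw [h2 b (a ⊔ b) le_sup_right, sup_assoc,
        sup_eq_right.mpr (gc.le_u_l b : b ≤ g (f b))]
    · intro h3 a b hab
      have := h3 b a
      rw [sup_eq_left.mpr hab] at this
      exact this
end

section
/- Let (f, g) be a Galois connection between posets P and Q, where P has binary joins and Q has a bottom element ⊥. Then the following are equivalent: (RM0) g(f(x)) = x ∨ g(⊥) for all x; (RM4) f(a) = f(b) implies a ∨ g(⊥) = b ∨ g(⊥); (RM5) f(a) ≤ f(b) implies a ≤ b ∨ g(⊥). -/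
theorem RM0_iff_RM4_iff_RM5 {P Q : Type*} [SemilatticeSup P] [PartialOrder Q] [OrderBot Q]
    {f : P → Q} {g : Q → P} (gc : GaloisConnection f g) :
    ((∀ x : P, g (f x) = x ⊔ g ⊥) ↔
      (∀ a b : P, f a = f b → a ⊔ g ⊥ = b ⊔ g ⊥)) ∧
    ((∀ a b : P, f a = f b → a ⊔ g ⊥ = b ⊔ g ⊥) ↔
      (∀ a b : P, f a ≤ f b → a ≤ b ⊔ g ⊥)) := by
  have h04 : (∀ x : P, g (f x) = x ⊔ g ⊥) → (∀ a b : P, f a = f b → a ⊔ g ⊥ = b ⊔ g ⊥) := by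
    intro h a b hab
    rw [← h a, ← h b, hab]
  have h45 : (∀ a b : P, f a = f b → a ⊔ g ⊥ = b ⊔ g ⊥) →
      (∀ a b : P, f a ≤ f b → a ≤ b ⊔ g ⊥) := by
    intro h a b hab
    have hfab : f (a ⊔ b) = f b := by
      refine le_antisymm ((gc _ _).mpr (sup_le ((gc _ _).mp hab) (gc.le_u_l b)))
        (gc.monotone_l le_sup_right)
    calc a ≤ (a ⊔ b) ⊔ g ⊥ := le_sup_of_le_left le_sup_left
    _ = b ⊔ g ⊥ := h _ _ hfab
  have h50 : (∀ a b : P, f a ≤ f b → a ≤ b ⊔ g ⊥) → (∀ x : P, g (f x) = x ⊔ g ⊥) := by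
    intro h x
    refine le_antisymm (h _ _ (le_of_eq (gc.l_u_l_eq_l x)))
      (sup_le (gc.le_u_l x) (gc.monotone_u bot_le))
  exact ⟨⟨h04, fun h4 => h50 (h45 h4)⟩, ⟨h45, fun h5 => h04 (h50 h5)⟩⟩
end

section
/- Let (f, g) be a Galois connection between posets P and Q, where P has a top element ⊤ and Q has binary meets. Then the following are equivalent: (LM0) f(g(y)) = y ∧ f(⊤) for all y; (LM4) g(c) = g(d) implies c ∧ f(⊤) = d ∧ f(⊤); (LM5) g(c) ≤ g(d) implies c ∧ f(⊤) ≤ d. -/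
theorem LM0_iff_LM4_iff_LM5 {P Q : Type*} [PartialOrder P] [OrderTop P] [SemilatticeInf Q]
    {f : P → Q} {g : Q → P} (gc : GaloisConnection f g) :
    ((∀ y : Q, f (g y) = y ⊓ f ⊤) ↔
      (∀ c d : Q, g c = g d → c ⊓ f ⊤ = d ⊓ f ⊤)) ∧
    ((∀ c d : Q, g c = g d → c ⊓ f ⊤ = d ⊓ f ⊤) ↔
      (∀ c d : Q, g c ≤ g d → c ⊓ f ⊤ ≤ d)) := by
  have hle : ∀ y : Q, f (g y) ≤ y ⊓ f ⊤ := fun y =>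
    le_inf (gc.l_u_le y) (gc.monotone_l le_top)
  have hBC : (∀ c d : Q, g c = g d → c ⊓ f ⊤ = d ⊓ f ⊤) ↔
      (∀ c d : Q, g c ≤ g d → c ⊓ f ⊤ ≤ d) := by
    constructor
    · intro h4 c d hcd
      have hg : g (c ⊓ d) = g c := by
        apply le_antisymm
        · exact (gc.le_u (le_trans (gc.l_u_le _) inf_le_left))
        · exact gc.le_u (le_inf (gc.l_u_le c) (gc.l_le hcd))
      have := h4 (c ⊓ d) c hg
      calc c ⊓ f ⊤ = (c ⊓ d) ⊓ f ⊤ := this.symm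
        _ ≤ d := le_trans inf_le_left inf_le_right
    · intro h5 c d hcd
      exact le_antisymm (le_inf (h5 c d hcd.le) inf_le_right)
        (le_inf (h5 d c hcd.ge) inf_le_right)
  have hCA : (∀ c d : Q, g c ≤ g d → c ⊓ f ⊤ ≤ d) →
      (∀ y : Q, f (g y) = y ⊓ f ⊤) := by
    intro h5 y
    exact le_antisymm (hle y) (h5 y (f (g y)) (gc.le_u_l (g y)))
  refine ⟨⟨fun h0 c d hcd => by rw [← h0 c, ← h0 d, hcd], fun h4 => hCA (hBC.mp h4)⟩, hBC⟩
end

section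
/- Let (f, g) be a Galois connection between posets P and Q with binary meets. The following are equivalent: (LF0, Frobenius reciprocity) c ∧ f(b) = f(g(c) ∧ b) for all b ∈ P, c ∈ Q; (LF1) whenever c ≤ f(b), there exists a ≤ b with c = f(a). -/
theorem LF0_iff_LF1 {P Q : Type*} [SemilatticeInf P] [SemilatticeInf Q]
    {f : P → Q} {g : Q → P} (gc : GaloisConnection f g) :
    (∀ (b : P) (c : Q), c ⊓ f b = f (g c ⊓ b)) ↔
      (∀ (b : P) (c : Q), c ≤ f b → ∃ a : P, a ≤ b ∧ c = f a) := by
  constructor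
  · intro h b c hc
    exact ⟨g c ⊓ b, inf_le_right, by rw [← h b c, inf_eq_left.mpr hc]⟩
  · intro h b c
    apply le_antisymm
    · obtain ⟨a, hab, ha⟩ := h b (c ⊓ f b) inf_le_right
      have : a ≤ g c := gc.le_iff_le.mp (ha ▸ inf_le_left)
      exact ha ▸ gc.monotone_l (le_inf this hab)
    · exact le_inf (gc.l_le inf_le_left) (gc.monotone_l inf_le_right)
end

section
/- Let (f, g) be a Galois connection between posets P and Q with binary joins. The following are equivalent: (RF0) a ∨ g(c) = g(f(a) ∨ c) for all a ∈ P, c ∈ Q; (RF1) whenever b ≥ g(c), there exists d ≥ c with b = g(d). -/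
theorem RF0_iff_RF1 {P Q : Type*} [SemilatticeSup P] [SemilatticeSup Q]
    {f : P → Q} {g : Q → P} (gc : GaloisConnection f g) :
    (∀ (a : P) (c : Q), a ⊔ g c = g (f a ⊔ c)) ↔
      (∀ (b : P) (c : Q), g c ≤ b → ∃ d : Q, c ≤ d ∧ b = g d) := by
  constructor
  · intro h b c hcb
    exact ⟨f b ⊔ c, le_sup_right, by rw [← h b c, sup_eq_left.mpr hcb]⟩
  · intro h a c
    obtain ⟨d, hcd, hd⟩ := h (a ⊔ g c) c (le_sup_right)
    apply le_antisymm
    · exact sup_le (gc.le_u_l a |>.trans (gc.monotone_u le_sup_left))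
        (gc.monotone_u le_sup_right)
    · rw [hd]
      apply gc.monotone_u
      apply sup_le _ hcd
      rw [gc]
      rw [← hd]
      exact le_sup_left
end
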